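/- arXiv:2109.14610 — 2 statements merged into one kernel-verified Lean document; each statement's English description precedes it below -/
import Mathlib

section
/- Let n be a positive integer and let q ≥ R(2n,2n,2n,2n), the 4-color Ramsey number for cliques of size 2n. Let H be a bipartite graph with ordered parts (a_1,…,a_q) and (b_1,…,b_q). Then there exists a set L ⊆ [q] with |L| = n such that the subgraph of H induced on {a_i, b_i : i ∈ L} is isomorphic (respecting the pairing and order) to one of: the edgeless graph H^n_∅, the perfect matching H^n_M (edges a_i b_i), the chain graph H^n_C (edges a_i b_j for i ≤ j), the strict chain graph H^n_C' (edges a_i b_j for i < j), the anti-matching H^n_A (edges a_i b_j for i ≠ j), or the complete bipartite graph H^n_K (all edges a_i b_j). -/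
/-- Four-colour Ramsey property: every symmetric 4-colouring of the pairs of
`Fin R` admits a monochromatic set of size `s`. -/
def HasRamsey4 (s R : ℕ) : Prop :=
  ∀ c : Fin R → Fin R → Fin 4, (∀ i j, c i j = c j i) →
    ∃ (k : Fin 4) (S : Finset (Fin R)), S.card = s ∧
      ∀ i ∈ S, ∀ j ∈ S, i ≠ j → c i j = k

/-- `ramsey4 s` is the 4-colour Ramsey number `R(s,s,s,s)`. -/
noncomputable def ramsey4 (s : ℕ) : ℕ := sInf {R | HasRamsey4 s R}


open Classical in
/-- encode two propositions into a colour -/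
noncomputable def code4 (p q : Prop) : Fin 4 :=
  if p then (if q then 3 else 1) else (if q then 2 else 0)

lemma code4_zero {p q : Prop} (h : code4 p q = 0) : ¬p ∧ ¬q := by
  by_cases hp : p <;> by_cases hq : q <;> simp [code4, hp, hq] at h ⊢ <;> exact absurd h (by decide)

lemma code4_one {p q : Prop} (h : code4 p q = 1) : p ∧ ¬q := by
  by_cases hp : p <;> by_cases hq : q <;> simp [code4, hp, hq] at h ⊢ <;> exact absurd h (by decide)

lemma code4_two {p q : Prop} (h : code4 p q = 2) : ¬p ∧ q := by
  by_cases hp : p <;> by_cases hq : q <;> simp [code4, hp, hq] at h ⊢ <;> exact absurd h (by decide)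

lemma code4_three {p q : Prop} (h : code4 p q = 3) : p ∧ q := by
  by_cases hp : p <;> by_cases hq : q <;> simp [code4, hp, hq] at h ⊢ <;> exact absurd h (by decide)

/-- greedy colour-focusing step -/
lemma ramsey_step {α : Type*} [DecidableEq α] (m : ℕ) (c : α → α → Fin 4) :
    ∀ A : Finset α, 4 ^ m ≤ A.card →
    ∃ v : Fin m → α, Function.Injective v ∧ (∀ i, v i ∈ A) ∧
      ∃ g : Fin m → Fin 4, ∀ i j : Fin m, i < j → c (v i) (v j) = g i := by
  induction m with
  | zero =>
    intro A _
    exact ⟨Fin.elim0, fun i => i.elim0, fun i => i.elim0, Fin.elim0, fun i => i.elim0⟩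
  | succ m ih =>
    intro A hA
    have hpos : 0 < A.card := lt_of_lt_of_le (by positivity) hA
    obtain ⟨a, ha⟩ := Finset.card_pos.mp hpos
    set A' := A.erase a with hA'
    have hcard' : A'.card = A.card - 1 := Finset.card_erase_of_mem ha
    have hsum : ∑ k : Fin 4, ((A'.filter (fun x => c a x = k)).card) = A'.card := by
      rw [← Finset.card_eq_sum_card_fiberwise (fun x _ => Finset.mem_univ (c a x))]
    have hex : ∃ k : Fin 4, 4 ^ m ≤ (A'.filter (fun x => c a x = k)).card := by
      by_contra hcon
      push_neg at hcon
      have hle : ∑ k : Fin 4, ((A'.filter (fun x => c a x = k)).card)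
          ≤ ∑ _k : Fin 4, (4 ^ m - 1) :=
        Finset.sum_le_sum (fun k _ => by have := hcon k; omega)
      have h1 : (1:ℕ) ≤ 4 ^ m := Nat.one_le_pow _ _ (by norm_num)
      have h2 : (4:ℕ) ^ (m+1) = 4 ^ m * 4 := pow_succ 4 m
      simp only [Finset.sum_const, Finset.card_univ, Fintype.card_fin, smul_eq_mul] at hle
      omega
    obtain ⟨k, hk⟩ := hex
    obtain ⟨v', hinj', hmem', g', hg'⟩ := ih _ hk
    refine ⟨Fin.cases a v', ?_, ?_, Fin.cases k g', ?_⟩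
    · intro i j hij
      induction i using Fin.cases with
      | zero =>
        induction j using Fin.cases with
        | zero => rfl
        | succ j =>
          exfalso
          have := hmem' j
          simp at hij
          rw [← hij] at this
          exact (Finset.mem_erase.mp (Finset.mem_filter.mp this).1).1 rfl
      | succ i =>
        induction j using Fin.cases with
        | zero =>
          exfalso
          have := hmem' i
          simp at hij
          rw [hij] at this
          exact (Finset.mem_erase.mp (Finset.mem_filter.mp this).1).1 rfl
        | succ j =>
          simp only [Fin.cases_succ] at hij
          exact congrArg Fin.succ (hinj' hij)
    · intro i
      induction i using Fin.cases with
      | zero => simpa using ha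
      | succ i =>
        have := hmem' i
        simp only [Fin.cases_succ]
        exact Finset.mem_of_mem_erase (Finset.mem_filter.mp this).1
    · intro i j hij
      induction i using Fin.cases with
      | zero =>
        induction j using Fin.cases with
        | zero => exact absurd hij (lt_irrefl _)
        | succ j =>
          simp only [Fin.cases_zero, Fin.cases_succ]
          exact (Finset.mem_filter.mp (hmem' j)).2
      | succ i =>
        induction j using Fin.cases with
        | zero => exact absurd hij (by simp [Fin.lt_def])
        | succ j =>
          simp only [Fin.cases_succ]
          exact hg' i j (by simpa [Fin.succ_lt_succ_iff] using hij)

lemma hasRamsey4_pow (s : ℕ) : HasRamsey4 s (4 ^ (4 * s)) := by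
  intro c hsym
  obtain ⟨v, hinj, -, g, hg⟩ := ramsey_step (4 * s) c Finset.univ
    (by simp)
  -- pigeonhole: some colour class among g has ≥ s elements
  have hmaps : ∀ i ∈ (Finset.univ : Finset (Fin (4*s))), g i ∈ (Finset.univ : Finset (Fin 4)) :=
    fun i _ => Finset.mem_univ _
  have hcard : (Finset.univ : Finset (Fin 4)).card * s
      ≤ (Finset.univ : Finset (Fin (4*s))).card := by simp [mul_comm]
  obtain ⟨k, -, hk⟩ := Finset.exists_le_card_fiber_of_mul_le_card_of_maps_to hmaps
    ⟨0, Finset.mem_univ 0⟩ hcard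
  obtain ⟨I, hIsub, hIcard⟩ := Finset.exists_subset_card_eq hk
  refine ⟨k, I.image v, ?_, ?_⟩
  · rw [Finset.card_image_of_injective _ hinj, hIcard]
  · intro x hx y hy hxy
    obtain ⟨i, hi, rfl⟩ := Finset.mem_image.mp hx
    obtain ⟨j, hj, rfl⟩ := Finset.mem_image.mp hy
    have hgi : g i = k := (Finset.mem_filter.mp (hIsub hi)).2
    have hgj : g j = k := (Finset.mem_filter.mp (hIsub hj)).2
    have hij : i ≠ j := fun h => hxy (congrArg v h)
    rcases lt_or_gt_of_ne hij with h | h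
    · rw [hg i j h, hgi]
    · rw [hsym, hg j i h, hgj]

lemma hasRamsey4_mono {s R q : ℕ} (h : HasRamsey4 s R) (hq : R ≤ q) : HasRamsey4 s q := by
  intro c hsym
  obtain ⟨k, S, hcard, hmono⟩ := h (fun i j => c (Fin.castLE hq i) (Fin.castLE hq j))
    (fun i j => hsym _ _)
  refine ⟨k, S.image (Fin.castLE hq), ?_, ?_⟩
  · rw [Finset.card_image_of_injective _ (Fin.castLE_injective hq), hcard]
  · intro x hx y hy hxy
    obtain ⟨i, hi, rfl⟩ := Finset.mem_image.mp hx
    obtain ⟨j, hj, rfl⟩ := Finset.mem_image.mp hy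
    exact hmono i hi j hj (fun h => hxy (congrArg _ h))

lemma hasRamsey4_of_le {s q : ℕ} (hq : ramsey4 s ≤ q) : HasRamsey4 s q := by
  have hne : {R | HasRamsey4 s R}.Nonempty := ⟨_, hasRamsey4_pow s⟩
  exact hasRamsey4_mono (Nat.sInf_mem hne) hq

/-- if `q ≥ R(2n,2n,2n,2n)`, any bipartite graph with ordered
pairs `(a_1,…,a_q),(b_1,…,b_q)` (encoded by `E i j` meaning `a_i ~ b_j`)
contains a set of `n` partner pairs inducing one of the six canonical graphs. -/
theorem stmt0 (n q : ℕ) (hn : 1 ≤ n) (hq : ramsey4 (2 * n) ≤ q)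
    (E : Fin q → Fin q → Prop) :
    ∃ f : Fin n → Fin q, Function.Injective f ∧
      ((∀ i j, ¬ E (f i) (f j)) ∨
       (∀ i j, E (f i) (f j) ↔ i = j) ∨
       (∀ i j, E (f i) (f j) ↔ i ≤ j) ∨
       (∀ i j, E (f i) (f j) ↔ i < j) ∨
       (∀ i j, E (f i) (f j) ↔ i ≠ j) ∨
       (∀ i j, E (f i) (f j))) := by
  classical
  have hram : HasRamsey4 (2 * n) q := hasRamsey4_of_le hq
  set c : Fin q → Fin q → Fin 4 :=
    fun i j => code4 (E (min i j) (max i j)) (E (max i j) (min i j)) with hc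
  have hcsym : ∀ i j, c i j = c j i := by
    intro i j; simp [hc, min_comm, max_comm]
  obtain ⟨k, S, hScard, hSmono⟩ := hram c hcsym
  -- split S by the diagonal
  have hsplit : (S.filter (fun i => E i i)).card + (S.filter (fun i => ¬ E i i)).card = 2 * n :=
    by rw [Finset.card_filter_add_card_filter_not, hScard]
  have hDiag : ∃ U : Finset (Fin q), U ⊆ S ∧ U.card = n ∧
      ((∀ i ∈ U, E i i) ∨ (∀ i ∈ U, ¬ E i i)) := by
    rcases le_or_gt n (S.filter (fun i => E i i)).card with h | h
    · obtain ⟨U, hUsub, hUcard⟩ := Finset.exists_subset_card_eq h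
      exact ⟨U, fun x hx => Finset.mem_of_mem_filter x (hUsub hx), hUcard,
        Or.inl fun i hi => (Finset.mem_filter.mp (hUsub hi)).2⟩
    · obtain ⟨U, hUsub, hUcard⟩ := Finset.exists_subset_card_eq (show n ≤ (S.filter (fun i => ¬ E i i)).card by omega)
      exact ⟨U, fun x hx => Finset.mem_of_mem_filter x (hUsub hx), hUcard,
        Or.inr fun i hi => (Finset.mem_filter.mp (hUsub hi)).2⟩
  obtain ⟨U, hUS, hUcard, hUdiag⟩ := hDiag
  set f : Fin n → Fin q := ⇑(U.orderEmbOfFin hUcard) with hf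
  have hmono : StrictMono f := (U.orderEmbOfFin hUcard).strictMono
  have hfinj : Function.Injective f := hmono.injective
  have hfmem : ∀ i, f i ∈ S := fun i => hUS (U.orderEmbOfFin_mem hUcard i)
  have hdiag : (∀ i, E (f i) (f i)) ∨ (∀ i, ¬ E (f i) (f i)) := by
    rcases hUdiag with h | h
    · exact Or.inl fun i => h _ (U.orderEmbOfFin_mem hUcard i)
    · exact Or.inr fun i => h _ (U.orderEmbOfFin_mem hUcard i)
  have hpair : ∀ i j : Fin n, i < j →
      code4 (E (f i) (f j)) (E (f j) (f i)) = k := by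
    intro i j hij
    have hlt : f i < f j := hmono hij
    have h2 : code4 (E (min (f i) (f j)) (max (f i) (f j)))
        (E (max (f i) (f j)) (min (f i) (f j))) = k :=
      hSmono (f i) (hfmem i) (f j) (hfmem j) (ne_of_lt hlt)
    rwa [min_eq_left hlt.le, max_eq_right hlt.le] at h2
  fin_cases k
  · -- colour 0 : no cross edges
    rcases hdiag with hd | hd
    · -- matching
      refine ⟨f, hfinj, Or.inr (Or.inl fun i j => ?_)⟩
      constructor
      · intro hE
        by_contra hne
        rcases lt_or_gt_of_ne hne with h | h
        · exact (code4_zero (hpair i j h)).1 hE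
        · exact (code4_zero (hpair j i h)).2 hE
      · rintro rfl; exact hd _
    · -- empty
      refine ⟨f, hfinj, Or.inl fun i j hE => ?_⟩
      rcases lt_trichotomy i j with h | rfl | h
      · exact (code4_zero (hpair i j h)).1 hE
      · exact hd _ hE
      · exact (code4_zero (hpair j i h)).2 hE
  · -- colour 1 : E (f i) (f j) exactly for i < j (plus diagonal)
    rcases hdiag with hd | hd
    · -- chain i ≤ j
      refine ⟨f, hfinj, Or.inr (Or.inr (Or.inl fun i j => ?_))⟩
      constructor
      · intro hE
        by_contra hle
        push_neg at hle
        exact (code4_one (hpair j i hle)).2 hE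
      · intro hle
        rcases eq_or_lt_of_le hle with rfl | h
        · exact hd _
        · exact (code4_one (hpair i j h)).1
    · -- strict chain i < j
      refine ⟨f, hfinj, Or.inr (Or.inr (Or.inr (Or.inl fun i j => ?_)))⟩
      constructor
      · intro hE
        by_contra hle
        push_neg at hle
        rcases eq_or_lt_of_le hle with rfl | h
        · exact hd _ hE
        · exact (code4_one (hpair j i h)).2 hE
      · exact fun h => (code4_one (hpair i j h)).1
  · -- colour 2 : E (f i) (f j) exactly for i > j; reverse order
    rcases hdiag with hd | hd
    · refine ⟨f ∘ Fin.rev, hfinj.comp Fin.rev_injective,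
        Or.inr (Or.inr (Or.inl fun i j => ?_))⟩
      simp only [Function.comp_apply]
      constructor
      · intro hE
        by_contra hle
        push_neg at hle
        exact (code4_two (hpair i.rev j.rev (Fin.rev_lt_rev.mpr hle))).1 hE
      · intro hle
        rcases eq_or_lt_of_le hle with rfl | h
        · exact hd _
        · exact (code4_two (hpair j.rev i.rev (Fin.rev_lt_rev.mpr h))).2
    · refine ⟨f ∘ Fin.rev, hfinj.comp Fin.rev_injective,
        Or.inr (Or.inr (Or.inr (Or.inl fun i j => ?_)))⟩
      simp only [Function.comp_apply]
      constructor
      · intro hE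
        by_contra hle
        push_neg at hle
        rcases eq_or_lt_of_le hle with rfl | h
        · exact hd _ hE
        · exact (code4_two (hpair i.rev j.rev (Fin.rev_lt_rev.mpr h))).1 hE
      · exact fun h => (code4_two (hpair j.rev i.rev (Fin.rev_lt_rev.mpr h))).2
  · -- colour 3 : all cross edges
    rcases hdiag with hd | hd
    · -- complete
      refine ⟨f, hfinj, Or.inr (Or.inr (Or.inr (Or.inr (Or.inr fun i j => ?_))))⟩
      rcases lt_trichotomy i j with h | rfl | h
      · exact (code4_three (hpair i j h)).1
      · exact hd _
      · exact (code4_three (hpair j i h)).2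
    · -- anti-matching
      refine ⟨f, hfinj, Or.inr (Or.inr (Or.inr (Or.inr (Or.inl fun i j => ?_))))⟩
      constructor
      · rintro hE rfl; exact hd _ hE
      · intro hne
        rcases lt_or_gt_of_ne hne with h | h
        · exact (code4_three (hpair i j h)).1
        · exact (code4_three (hpair j i h)).2
end

section
/- A family F of bipartite graphs with ordered paired parts is partner-hereditary if for each graph in F on pairs (a_1,b_1),…,(a_n,b_n) and each subset L ⊆ [n], the induced subgraph on {a_i,b_i : i ∈ L} is again (isomorphic to a graph) in F. F is size-identifiable if for each n it contains exactly one graph on 2n vertices up to isomorphism. Then there are exactly six families that are both partner-hereditary and size-identifiable: the family of edgeless graphs, the matchings, the chain graphs (edges a_i b_j for i ≤ j), the strict chain graphs (edges a_i b_j for i < j), the anti-matchings (edges a_i b_j for i ≠ j), and the complete bipartite graphs. -/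
/-- A bipartite graph with ordered paired parts `(a_1,…,a_n),(b_1,…,b_n)` is
encoded by the relation `R i j` meaning `a_i ~ b_j`.  A family contains, for
each size `n`, a set of such graphs. -/
abbrev BipFamily : Type := ∀ n : ℕ, Set (Fin n → Fin n → Prop)

/-- Isomorphism of bipartite graphs with paired parts: a permutation of the
pairs, possibly also swapping the two sides. -/
def BipIso {n : ℕ} (R R' : Fin n → Fin n → Prop) : Prop :=
  ∃ σ : Equiv.Perm (Fin n),
    (∀ i j, R i j ↔ R' (σ i) (σ j)) ∨ (∀ i j, R i j ↔ R' (σ j) (σ i))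

/-- Partner-hereditary: the induced subgraph on any subset of the pairs is
(isomorphic to) a member of the family. -/
def PartnerHereditary (F : BipFamily) : Prop :=
  ∀ n, ∀ R ∈ F n, ∀ m, ∀ f : Fin m ↪o Fin n,
    ∃ R' ∈ F m, BipIso R' (fun i j => R (f i) (f j))

/-- Size-identifiable: for each `n` there is exactly one `2n`-vertex member,
up to isomorphism. -/
def SizeIdentifiable (F : BipFamily) : Prop :=
  ∀ n, ∃ R ∈ F n, ∀ R' ∈ F n, BipIso R R'

/-- The six canonical graphs of each order: edgeless, matching, chain,
strict chain, anti-matching, complete bipartite. -/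
def canon : Fin 6 → ∀ n : ℕ, Fin n → Fin n → Prop :=
  ![fun _ _ _ => False,
    fun _ i j => i = j,
    fun _ i j => i ≤ j,
    fun _ i j => i < j,
    fun _ i j => i ≠ j,
    fun _ _ _ => True]

/-- The family generated by one of the six canonical graphs. -/
def canonFamily (x : Fin 6) : BipFamily := fun n => {R | BipIso R (canon x n)}

theorem bipIso_refl {n} (R : Fin n → Fin n → Prop) : BipIso R R :=
  ⟨1, Or.inl fun _ _ => Iff.rfl⟩

theorem bipIso_symm {n} {R R' : Fin n → Fin n → Prop} (h : BipIso R R') : BipIso R' R := by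
  obtain ⟨σ, h | h⟩ := h
  · exact ⟨σ⁻¹, Or.inl fun i j => by simpa using (h (σ⁻¹ i) (σ⁻¹ j)).symm⟩
  · exact ⟨σ⁻¹, Or.inr fun i j => by simpa using (h (σ⁻¹ j) (σ⁻¹ i)).symm⟩

theorem bipIso_trans {n} {R R' R'' : Fin n → Fin n → Prop}
    (h : BipIso R R') (h' : BipIso R' R'') : BipIso R R'' := by
  obtain ⟨σ, h | h⟩ := h <;> obtain ⟨τ, h' | h'⟩ := h'
  · exact ⟨σ.trans τ, Or.inl fun i j => (h i j).trans (h' (σ i) (σ j))⟩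
  · exact ⟨σ.trans τ, Or.inr fun i j => (h i j).trans (h' (σ i) (σ j))⟩
  · exact ⟨σ.trans τ, Or.inr fun i j => (h i j).trans (h' (σ j) (σ i))⟩
  · exact ⟨σ.trans τ, Or.inl fun i j => (h i j).trans (h' (σ j) (σ i))⟩

theorem bipIso_congr {n} {A A' B B' : Fin n → Fin n → Prop}
    (hA : ∀ i j, A i j ↔ A' i j) (hB : ∀ i j, B i j ↔ B' i j) (h : BipIso A B) :
    BipIso A' B' := by
  obtain ⟨σ, h | h⟩ := h
  · exact ⟨σ, Or.inl fun i j => ((hA i j).symm.trans (h i j)).trans (hB _ _)⟩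
  · exact ⟨σ, Or.inr fun i j => ((hA i j).symm.trans (h i j)).trans (hB _ _)⟩

/-- sorting permutation for a strict linear order given abstractly -/
theorem exists_sorting_perm {n : ℕ} (r : Fin n → Fin n → Prop)
    (total : ∀ i j, i = j ∨ r i j ∨ r j i)
    (anti : ∀ i j, r i j → r j i → False)
    (htrans : ∀ i j k, r i j → r j k → r i k) :
    ∃ σ : Equiv.Perm (Fin n), ∀ i j, r (σ i) (σ j) ↔ i < j := by
  classical
  have irrefl : ∀ i, ¬ r i i := fun i h => anti i i h h
  set s : Fin n → Finset (Fin n) := fun i => Finset.univ.filter (fun j => r j i) with hs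
  have hmem : ∀ i j, j ∈ s i ↔ r j i := by intro i j; simp [hs]
  have hlt : ∀ i k, r i k → (s i).card < (s k).card := by
    intro i k hik
    apply Finset.card_lt_card
    constructor
    · intro j hj
      rw [hmem] at hj ⊢
      exact htrans j i k hj hik
    · intro hsub
      have h1 : i ∈ s k := (hmem k i).2 hik
      exact irrefl i ((hmem i i).1 (hsub h1))
  have hr_iff : ∀ i k, r i k ↔ (s i).card < (s k).card := by
    intro i k
    refine ⟨hlt i k, fun h => ?_⟩
    rcases total i k with rfl | hik | hki
    · omega
    · exact hik
    · exact absurd (hlt k i hki) (by omega)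
  have hcard : ∀ i, (s i).card < n := by
    intro i
    have hss : s i ⊂ Finset.univ := by
      rw [Finset.ssubset_univ_iff]
      intro h
      exact irrefl i ((hmem i i).1 (h ▸ Finset.mem_univ i))
    simpa using Finset.card_lt_card hss
  let g : Fin n → Fin n := fun i => ⟨(s i).card, hcard i⟩
  have hginj : Function.Injective g := by
    intro i k h
    by_contra hne
    have hv : (s i).card = (s k).card := congrArg Fin.val h
    rcases total i k with rfl | hik | hki
    · exact hne rfl
    · have := hlt i k hik; omega
    · have := hlt k i hki; omega
  have hgbij : Function.Bijective g := Finite.injective_iff_bijective.1 hginj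
  let e := Equiv.ofBijective g hgbij
  refine ⟨e.symm, fun i j => ?_⟩
  have h1 : ∀ i : Fin n, (s (e.symm i)).card = (i : ℕ) := by
    intro i
    have h2 : g (e.symm i) = i := e.apply_symm_apply i
    exact congrArg Fin.val h2
  rw [hr_iff, h1, h1]
  exact Iff.symm Fin.lt_def

/-- restriction of a canonical graph along any injection is again canonical -/
theorem canon_restrict (x : Fin 6) {m n : ℕ} (g : Fin m → Fin n)
    (hg : Function.Injective g) :
    BipIso (fun i j => canon x n (g i) (g j)) (canon x m) := by
  fin_cases x
  · exact ⟨1, Or.inl fun i j => Iff.rfl⟩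
  · exact ⟨1, Or.inl fun i j => by
      show g i = g j ↔ (i : Fin m) = j
      exact hg.eq_iff⟩
  · -- chain i ≤ j
    obtain ⟨σ, hσ⟩ := exists_sorting_perm (fun i j : Fin m => g i < g j)
      (fun i j => by
        rcases eq_or_ne i j with rfl | hne
        · exact Or.inl rfl
        · rcases lt_or_gt_of_ne (fun h : g i = g j => hne (hg h)) with h | h
          · exact Or.inr (Or.inl h)
          · exact Or.inr (Or.inr h))
      (fun i j h1 h2 => absurd h1 (not_lt_of_gt h2))
      (fun i j k h1 h2 => h1.trans h2)
    refine bipIso_symm ⟨σ, Or.inl fun i j => ?_⟩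
    show (i : Fin m) ≤ j ↔ g (σ i) ≤ g (σ j)
    constructor
    · intro h
      rcases eq_or_lt_of_le h with rfl | h
      · exact le_refl _
      · exact le_of_lt ((hσ i j).2 h)
    · intro h
      rcases eq_or_lt_of_le h with h | h
      · exact le_of_eq (σ.injective (hg h))
      · exact le_of_lt ((hσ i j).1 h)
  · -- strict chain i < j
    obtain ⟨σ, hσ⟩ := exists_sorting_perm (fun i j : Fin m => g i < g j)
      (fun i j => by
        rcases eq_or_ne i j with rfl | hne
        · exact Or.inl rfl
        · rcases lt_or_gt_of_ne (fun h : g i = g j => hne (hg h)) with h | h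
          · exact Or.inr (Or.inl h)
          · exact Or.inr (Or.inr h))
      (fun i j h1 h2 => absurd h1 (not_lt_of_gt h2))
      (fun i j k h1 h2 => h1.trans h2)
    refine bipIso_symm ⟨σ, Or.inl fun i j => ?_⟩
    show (i : Fin m) < j ↔ g (σ i) < g (σ j)
    exact (hσ i j).symm
  · exact ⟨1, Or.inl fun i j => by
      show g i ≠ g j ↔ (i : Fin m) ≠ j
      exact hg.ne_iff⟩
  · exact ⟨1, Or.inl fun i j => Iff.rfl⟩

theorem canonFamily_ph (x : Fin 6) : PartnerHereditary (canonFamily x) := by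
  intro n R hR m f
  refine ⟨fun i j => R (f i) (f j), ?_, bipIso_refl _⟩
  obtain ⟨σ, h | h⟩ := hR
  · exact bipIso_trans
      ⟨1, Or.inl fun i j => h (f i) (f j)⟩
      (canon_restrict x (fun i => σ (f i)) (σ.injective.comp f.injective))
  · exact bipIso_trans
      ⟨1, Or.inr fun i j => h (f i) (f j)⟩
      (canon_restrict x (fun i => σ (f i)) (σ.injective.comp f.injective))

theorem canonFamily_si (x : Fin 6) : SizeIdentifiable (canonFamily x) := by
  intro n
  exact ⟨canon x n, bipIso_refl _, fun R' hR' => bipIso_symm hR'⟩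

/- part 2 : distinctness via boolean surrogate -/

def cB : Fin 6 → Fin 2 → Fin 2 → Bool :=
  ![fun _ _ => false,
    fun i j => decide (i = j),
    fun i j => decide (i ≤ j),
    fun i j => decide (i < j),
    fun i j => decide (i ≠ j),
    fun _ _ => true]

theorem cB_key : ∀ x y : Fin 6, x ≠ y →
    ¬ BipIso (fun i j => cB x i j = true) (fun i j => cB y i j = true) := by
  unfold BipIso; decide

theorem canon_cB : ∀ x : Fin 6, ∀ i j : Fin 2, canon x 2 i j ↔ cB x i j = true := by
  intro x
  fin_cases x
  · exact (by decide : ∀ i j : Fin 2, (False ↔ cB 0 i j = true))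
  · exact (by decide : ∀ i j : Fin 2, (i = j ↔ cB 1 i j = true))
  · exact (by decide : ∀ i j : Fin 2, (i ≤ j ↔ cB 2 i j = true))
  · exact (by decide : ∀ i j : Fin 2, (i < j ↔ cB 3 i j = true))
  · exact (by decide : ∀ i j : Fin 2, (i ≠ j ↔ cB 4 i j = true))
  · exact (by decide : ∀ i j : Fin 2, (True ↔ cB 5 i j = true))

theorem canon_distinct : ∀ x y : Fin 6, x ≠ y → ∃ n, ¬ BipIso (canon x n) (canon y n) :=
  fun x y hxy => ⟨2, fun h => cB_key x y hxy (bipIso_congr (canon_cB x) (canon_cB y) h)⟩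

/- part 3 infrastructure -/

def emb1 {n : ℕ} (i : Fin n) : Fin 1 ↪o Fin n :=
  OrderEmbedding.ofStrictMono (fun _ => i) (fun a b hab => absurd hab (by omega))

def emb2 {n : ℕ} (i j : Fin n) (h : i < j) : Fin 2 ↪o Fin n :=
  OrderEmbedding.ofStrictMono (fun a => if a = 0 then i else j) (by
    intro a b hab
    have hc : a = 0 ∧ b = 1 := by omega
    obtain ⟨rfl, rfl⟩ := hc
    simpa using h)

def emb3 {n : ℕ} (i j k : Fin n) (h1 : i < j) (h2 : j < k) : Fin 3 ↪o Fin n :=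
  OrderEmbedding.ofStrictMono (fun a => if a = 0 then i else if a = 1 then j else k) (by
    intro a b hab
    have hc : (a = 0 ∧ b = 1) ∨ (a = 0 ∧ b = 2) ∨ (a = 1 ∧ b = 2) := by omega
    rcases hc with ⟨rfl, rfl⟩ | ⟨rfl, rfl⟩ | ⟨rfl, rfl⟩ <;> simp
    · exact h1
    · exact h1.trans h2
    · exact h2)

theorem bipIso_fin1 {A B : Fin 1 → Fin 1 → Prop} (h : BipIso A B) : A 0 0 ↔ B 0 0 := by
  obtain ⟨σ, h | h⟩ := h <;>
  · have h00 := h 0 0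
    rwa [Subsingleton.elim (σ 0) 0] at h00

theorem bipIso_fin2 {A B : Fin 2 → Fin 2 → Prop} (h : BipIso A B) :
    ((A 0 1 ∧ A 1 0) ↔ (B 0 1 ∧ B 1 0)) ∧ ((A 0 1 ∨ A 1 0) ↔ (B 0 1 ∨ B 1 0)) := by
  have htwo : ∀ a : Fin 2, a = 0 ∨ a = 1 := fun a => by omega
  obtain ⟨σ, h | h⟩ := h <;>
  · have h01 := h 0 1
    have h10 := h 1 0
    have hcase : (σ 0 = 0 ∧ σ 1 = 1) ∨ (σ 0 = 1 ∧ σ 1 = 0) := by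
      have hne : σ 0 ≠ σ 1 := fun he => absurd (σ.injective he) (by omega)
      rcases htwo (σ 0) with h0 | h0 <;> rcases htwo (σ 1) with h1 | h1 <;>
        first
          | (exact absurd (h0.trans h1.symm) hne)
          | exact Or.inl ⟨h0, h1⟩
          | exact Or.inr ⟨h0, h1⟩
    rcases hcase with ⟨e0, e1⟩ | ⟨e0, e1⟩ <;> rw [e0, e1] at h01 h10 <;>
      exact ⟨by tauto, by tauto⟩

def HasCyc {n : ℕ} (R : Fin n → Fin n → Prop) : Prop :=
  ∃ a b c, a ≠ b ∧ b ≠ c ∧ a ≠ c ∧ R a b ∧ R b c ∧ R c a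

theorem hasCyc_of_iso {n} {A B : Fin n → Fin n → Prop} (h : BipIso A B)
    (hc : HasCyc A) : HasCyc B := by
  obtain ⟨a, b, c, hab, hbc, hac, c1, c2, c3⟩ := hc
  obtain ⟨σ, h | h⟩ := h
  · exact ⟨σ a, σ b, σ c, fun e => hab (σ.injective e), fun e => hbc (σ.injective e),
      fun e => hac (σ.injective e), (h a b).1 c1, (h b c).1 c2, (h c a).1 c3⟩
  · exact ⟨σ b, σ a, σ c, fun e => hab (σ.injective e).symm,
      fun e => hac (σ.injective e), fun e => hbc (σ.injective e),
      (h a b).1 c1, (h c a).1 c3, (h b c).1 c2⟩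

theorem hasCyc_restrict {n} {R : Fin n → Fin n → Prop} {f : Fin 3 ↪o Fin n}
    (h : HasCyc (fun i j => R (f i) (f j))) :
    (R (f 0) (f 1) ∧ R (f 1) (f 2) ∧ R (f 2) (f 0)) ∨
    (R (f 1) (f 0) ∧ R (f 2) (f 1) ∧ R (f 0) (f 2)) := by
  obtain ⟨a, b, c, hab, hbc, hac, c1, c2, c3⟩ := h
  fin_cases a <;> fin_cases b <;> fin_cases c <;>
    first
      | exact absurd rfl hab
      | exact absurd rfl hbc
      | exact absurd rfl hac
      | exact Or.inl ⟨c1, c2, c3⟩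
      | exact Or.inl ⟨c2, c3, c1⟩
      | exact Or.inl ⟨c3, c1, c2⟩
      | exact Or.inr ⟨c1, c2, c3⟩
      | exact Or.inr ⟨c2, c3, c1⟩
      | exact Or.inr ⟨c3, c1, c2⟩
      | exact Or.inr ⟨c1, c3, c2⟩
      | exact Or.inr ⟨c3, c2, c1⟩
      | exact Or.inr ⟨c2, c1, c3⟩

theorem triple_sort {n : ℕ} (x y z : Fin n) (hxy : x ≠ y) (hyz : y ≠ z) (hxz : x ≠ z) :
    ∃ (f : Fin 3 ↪o Fin n) (a b c : Fin 3),
      a ≠ b ∧ b ≠ c ∧ a ≠ c ∧ f a = x ∧ f b = y ∧ f c = z := by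
  rcases lt_trichotomy x y with h1 | h1 | h1
  · rcases lt_trichotomy y z with h2 | h2 | h2
    · exact ⟨emb3 x y z h1 h2, 0, 1, 2, by decide, by decide, by decide, rfl, rfl, rfl⟩
    · exact absurd h2 hyz
    · rcases lt_trichotomy x z with h3 | h3 | h3
      · exact ⟨emb3 x z y h3 h2, 0, 2, 1, by decide, by decide, by decide, rfl, rfl, rfl⟩
      · exact absurd h3 hxz
      · exact ⟨emb3 z x y h3 h1, 1, 2, 0, by decide, by decide, by decide, rfl, rfl, rfl⟩
  · exact absurd h1 hxy
  · rcases lt_trichotomy x z with h2 | h2 | h2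
    · exact ⟨emb3 y x z h1 h2, 1, 0, 2, by decide, by decide, by decide, rfl, rfl, rfl⟩
    · exact absurd h2 hxz
    · rcases lt_trichotomy y z with h3 | h3 | h3
      · exact ⟨emb3 y z x h3 h2, 2, 0, 1, by decide, by decide, by decide, rfl, rfl, rfl⟩
      · exact absurd h3 hyz
      · exact ⟨emb3 z y x h3 h1, 2, 1, 0, by decide, by decide, by decide, rfl, rfl, rfl⟩

theorem tourn_no_cyc {R4 : Fin 4 → Fin 4 → Prop}
    (tot : ∀ x y : Fin 4, x ≠ y → R4 x y ∨ R4 y x)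
    (anti : ∀ x y : Fin 4, x ≠ y → ¬(R4 x y ∧ R4 y x))
    (hcyc : ∀ f : Fin 3 ↪o Fin 4, HasCyc (fun i j => R4 (f i) (f j))) : False := by
  by_cases h1 : R4 0 1 <;> by_cases h2 : R4 0 2 <;> by_cases h3 : R4 0 3
  -- h1 h2 _ : source with 1 2
  · rcases hasCyc_restrict (hcyc (emb3 0 1 2 (by decide) (by decide))) with ⟨d1, d2, d3⟩ | ⟨d1, d2, d3⟩
    · exact anti 0 2 (by decide) ⟨h2, d3⟩
    · exact anti 0 1 (by decide) ⟨h1, d1⟩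
  · rcases hasCyc_restrict (hcyc (emb3 0 1 2 (by decide) (by decide))) with ⟨d1, d2, d3⟩ | ⟨d1, d2, d3⟩
    · exact anti 0 2 (by decide) ⟨h2, d3⟩
    · exact anti 0 1 (by decide) ⟨h1, d1⟩
  -- h1 ¬h2 h3 : source with 1 3
  · rcases hasCyc_restrict (hcyc (emb3 0 1 3 (by decide) (by decide))) with ⟨d1, d2, d3⟩ | ⟨d1, d2, d3⟩
    · exact anti 0 3 (by decide) ⟨h3, d3⟩
    · exact anti 0 1 (by decide) ⟨h1, d1⟩
  -- h1 ¬h2 ¬h3 : sink with 2 3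
  · have k2 : R4 2 0 := (tot 0 2 (by decide)).resolve_left h2
    have k3 : R4 3 0 := (tot 0 3 (by decide)).resolve_left h3
    rcases hasCyc_restrict (hcyc (emb3 0 2 3 (by decide) (by decide))) with ⟨d1, d2, d3⟩ | ⟨d1, d2, d3⟩
    · exact anti 0 2 (by decide) ⟨d1, k2⟩
    · exact anti 0 3 (by decide) ⟨d3, k3⟩
  -- ¬h1 h2 h3 : source with 2 3
  · rcases hasCyc_restrict (hcyc (emb3 0 2 3 (by decide) (by decide))) with ⟨d1, d2, d3⟩ | ⟨d1, d2, d3⟩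
    · exact anti 0 3 (by decide) ⟨h3, d3⟩
    · exact anti 0 2 (by decide) ⟨h2, d1⟩
  -- ¬h1 h2 ¬h3 : sink with 1 3
  · have k1 : R4 1 0 := (tot 0 1 (by decide)).resolve_left h1
    have k3 : R4 3 0 := (tot 0 3 (by decide)).resolve_left h3
    rcases hasCyc_restrict (hcyc (emb3 0 1 3 (by decide) (by decide))) with ⟨d1, d2, d3⟩ | ⟨d1, d2, d3⟩
    · exact anti 0 1 (by decide) ⟨d1, k1⟩
    · exact anti 0 3 (by decide) ⟨d3, k3⟩
  -- ¬h1 ¬h2 h3 : sink with 1 2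
  · have k1 : R4 1 0 := (tot 0 1 (by decide)).resolve_left h1
    have k2 : R4 2 0 := (tot 0 2 (by decide)).resolve_left h2
    rcases hasCyc_restrict (hcyc (emb3 0 1 2 (by decide) (by decide))) with ⟨d1, d2, d3⟩ | ⟨d1, d2, d3⟩
    · exact anti 0 1 (by decide) ⟨d1, k1⟩
    · exact anti 0 2 (by decide) ⟨d3, k2⟩
  · have k1 : R4 1 0 := (tot 0 1 (by decide)).resolve_left h1
    have k2 : R4 2 0 := (tot 0 2 (by decide)).resolve_left h2
    rcases hasCyc_restrict (hcyc (emb3 0 1 2 (by decide) (by decide))) with ⟨d1, d2, d3⟩ | ⟨d1, d2, d3⟩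
    · exact anti 0 1 (by decide) ⟨d1, k1⟩
    · exact anti 0 2 (by decide) ⟨d3, k2⟩

theorem classification (F : BipFamily) (hPH : PartnerHereditary F) (hSI : SizeIdentifiable F) :
    ∃ x : Fin 6, ∀ n, ∀ R ∈ F n, BipIso R (canon x n) := by
  classical
  choose Rep hMem hUniq using hSI
  have key : ∀ n, ∀ R ∈ F n, ∀ m, ∀ f : Fin m ↪o Fin n,
      BipIso (fun i j => R (f i) (f j)) (Rep m) := by
    intro n R hR m f
    obtain ⟨R', hR', hiso⟩ := hPH n R hR m f
    exact bipIso_trans (bipIso_symm hiso) (bipIso_symm (hUniq m R' hR'))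
  have hdiag : ∀ n, ∀ R ∈ F n, ∀ i : Fin n, (R i i ↔ Rep 1 0 0) := by
    intro n R hR i
    exact bipIso_fin1 (key n R hR 1 (emb1 i))
  have hpair : ∀ n, ∀ R ∈ F n, ∀ i j : Fin n, i ≠ j →
      ((R i j ∧ R j i ↔ (Rep 2 0 1 ∧ Rep 2 1 0)) ∧
       (R i j ∨ R j i ↔ (Rep 2 0 1 ∨ Rep 2 1 0))) := by
    intro n R hR i j hij
    rcases lt_or_gt_of_ne hij with h | h
    · exact bipIso_fin2 (key n R hR 2 (emb2 i j h))
    · have H := bipIso_fin2 (key n R hR 2 (emb2 j i h))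
      exact ⟨and_comm.trans H.1, or_comm.trans H.2⟩
  by_cases hQ : Rep 2 0 1 ∨ Rep 2 1 0
  · by_cases hP : Rep 2 0 1 ∧ Rep 2 1 0
    · by_cases hd : Rep 1 0 0
      · refine ⟨5, fun n R hR => ⟨1, Or.inl fun i j => ?_⟩⟩
        show R i j ↔ True
        refine ⟨fun _ => trivial, fun _ => ?_⟩
        rcases eq_or_ne i j with rfl | hne
        · exact (hdiag n R hR i).2 hd
        · exact ((hpair n R hR i j hne).1.mpr hP).1
      · refine ⟨4, fun n R hR => ⟨1, Or.inl fun i j => ?_⟩⟩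
        show R i j ↔ i ≠ j
        constructor
        · rintro h rfl
          exact hd ((hdiag n R hR i).1 h)
        · intro hne
          exact ((hpair n R hR i j hne).1.mpr hP).1
    · -- tournament case
      have tourn_or : ∀ n, ∀ R ∈ F n, ∀ i j : Fin n, i ≠ j → R i j ∨ R j i :=
        fun n R hR i j hij => ((hpair n R hR i j hij).2).mpr hQ
      have tourn_not : ∀ n, ∀ R ∈ F n, ∀ i j : Fin n, i ≠ j → ¬(R i j ∧ R j i) :=
        fun n R hR i j hij h => hP (((hpair n R hR i j hij).1).mp h)
      have hnocyc : ∀ n, ∀ R ∈ F n, ¬ HasCyc R := by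
        intro n R hR hcyc
        have h3 : HasCyc (Rep 3) := by
          obtain ⟨a, b, c, hab, hbc, hac, c1, c2, c3⟩ := hcyc
          obtain ⟨f, a', b', c', k1, k2, k3, e1, e2, e3⟩ := triple_sort a b c hab hbc hac
          refine hasCyc_of_iso (key n R hR 3 f) ⟨a', b', c', k1, k2, k3, ?_, ?_, ?_⟩
          · show R (f a') (f b'); rw [e1, e2]; exact c1
          · show R (f b') (f c'); rw [e2, e3]; exact c2
          · show R (f c') (f a'); rw [e3, e1]; exact c3
        refine tourn_no_cyc (R4 := Rep 4) (tourn_or 4 (Rep 4) (hMem 4))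
          (tourn_not 4 (Rep 4) (hMem 4)) ?_
        intro f
        exact hasCyc_of_iso (bipIso_symm (key 4 (Rep 4) (hMem 4) 3 f)) h3
      have hsort : ∀ n, ∀ R, F n R → ∃ σ : Equiv.Perm (Fin n),
          ∀ i j, ((σ i ≠ σ j ∧ R (σ i) (σ j)) ↔ i < j) := by
        intro n R hR
        exact exists_sorting_perm (fun i j : Fin n => i ≠ j ∧ R i j)
          (fun i j => by
            rcases eq_or_ne i j with rfl | hne
            · exact Or.inl rfl
            · rcases tourn_or n R hR i j hne with h | h
              · exact Or.inr (Or.inl ⟨hne, h⟩)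
              · exact Or.inr (Or.inr ⟨hne.symm, h⟩))
          (fun i j h1 h2 => tourn_not n R hR i j h1.1 ⟨h1.2, h2.2⟩)
          (fun i j k h1 h2 => by
            have hik : i ≠ k := by
              rintro rfl
              exact tourn_not n R hR i j h1.1 ⟨h1.2, h2.2⟩
            refine ⟨hik, ?_⟩
            by_contra hik'
            have hki : R k i := (tourn_or n R hR i k hik).resolve_left hik'
            exact hnocyc n R hR ⟨i, j, k, h1.1, h2.1, hik, h1.2, h2.2, hki⟩)
      by_cases hd : Rep 1 0 0
      · refine ⟨2, fun n R hR => ?_⟩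
        obtain ⟨σ, hσ⟩ := hsort n R hR
        refine bipIso_symm ⟨σ, Or.inl fun i j => ?_⟩
        show (i : Fin n) ≤ j ↔ R (σ i) (σ j)
        constructor
        · intro h
          rcases eq_or_lt_of_le h with rfl | h
          · exact (hdiag n R hR (σ i)).2 hd
          · exact ((hσ i j).2 h).2
        · intro h
          by_contra hle
          have hji : (j : Fin n) < i := lt_of_not_ge hle
          have hr := (hσ j i).2 hji
          exact tourn_not n R hR (σ j) (σ i) hr.1 ⟨hr.2, h⟩
      · refine ⟨3, fun n R hR => ?_⟩
        obtain ⟨σ, hσ⟩ := hsort n R hR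
        refine bipIso_symm ⟨σ, Or.inl fun i j => ?_⟩
        show (i : Fin n) < j ↔ R (σ i) (σ j)
        constructor
        · intro h
          exact ((hσ i j).2 h).2
        · intro h
          rcases lt_trichotomy i j with hlt | rfl | hgt
          · exact hlt
          · exact absurd ((hdiag n R hR (σ i)).1 h) hd
          · have hr := (hσ j i).2 hgt
            exact absurd ⟨hr.2, h⟩ (tourn_not n R hR (σ j) (σ i) hr.1)
  · by_cases hd : Rep 1 0 0
    · refine ⟨1, fun n R hR => ⟨1, Or.inl fun i j => ?_⟩⟩
      show R i j ↔ i = j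
      constructor
      · intro h
        by_contra hne
        exact hQ ((hpair n R hR i j hne).2.mp (Or.inl h))
      · rintro rfl
        exact (hdiag n R hR i).2 hd
    · refine ⟨0, fun n R hR => ⟨1, Or.inl fun i j => ?_⟩⟩
      show R i j ↔ False
      refine ⟨fun h => ?_, False.elim⟩
      rcases eq_or_ne i j with rfl | hne
      · exact hd ((hdiag n R hR i).1 h)
      · exact hQ ((hpair n R hR i j hne).2.mp (Or.inl h))

/-- there are exactly six partner-hereditary size-identifiable
families: each of the six canonical families is ph and si, they are pairwise
distinct, and every ph si family consists of graphs isomorphic to one of the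
six canonical kinds. -/
theorem stmt1 :
    (∀ x : Fin 6, PartnerHereditary (canonFamily x) ∧ SizeIdentifiable (canonFamily x)) ∧
    (∀ x y : Fin 6, x ≠ y → ∃ n, ¬ BipIso (canon x n) (canon y n)) ∧
    (∀ F : BipFamily, PartnerHereditary F → SizeIdentifiable F →
      ∃ x : Fin 6, ∀ n, ∀ R ∈ F n, BipIso R (canon x n)) :=
  ⟨fun x => ⟨canonFamily_ph x, canonFamily_si x⟩, canon_distinct, classification⟩
end
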